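/- arXiv:1710.10073 — 5 statements merged into one kernel-verified Lean document; each statement's English description precedes it below -/
import Mathlib

section
/- Let M > 0 be real, ω a positive integer, r > 0 real, and θ real with πω/2 < |θ| < πω. Then |∫_0^∞ e^{-t} t^{M-1} / (1 + (t/r)^{1/ω} e^{-iθ/ω}) dt| ≤ Γ(M) · |csc(θ/ω)|. -/
/-!
Multiplying the denominator `1 + x e^{-iφ}` (with `x = (t/r)^{1/ω}` real and `φ = θ/ω`) by the unit
`e^{iφ}` gives `e^{iφ} + x`, whose imaginary part is `sin φ`. So the denominator has modulus at least
`|sin φ|`, which is nonzero because `0 < |φ| < π`, and integrating the bound gives `Γ(M) / |sin φ|`.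
-/

open MeasureTheory Real Complex Set

theorem abs_sin_le_norm_one_add_ofReal_mul_exp (φ x : ℝ) :
    |Real.sin φ| ≤ ‖1 + (x : ℂ) * Complex.exp (-(φ : ℂ) * I)‖ := by
  have hrotate : Complex.exp (φ * I) * (1 + x * Complex.exp (-φ * I)) = Complex.exp (φ * I) + x := by
    rw [mul_add, mul_one, mul_left_comm, ← Complex.exp_add, neg_mul, add_neg_cancel,
      Complex.exp_zero, mul_one]
  calc |Real.sin φ| = |(Complex.exp (φ * I) + x).im| := by
        rw [add_im, exp_ofReal_mul_I_im, ofReal_im, add_zero]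
    _ ≤ ‖Complex.exp (φ * I) + x‖ := abs_im_le_norm _
    _ = ‖1 + x * Complex.exp (-φ * I)‖ := by
        rw [← hrotate, norm_mul, norm_exp_ofReal_mul_I, one_mul]

theorem norm_integral_gammaIntegrand_div_le {M c : ℝ} (hM : 0 < M) (hc : 0 < c) {g : ℝ → ℂ}
    (hg : ∀ t > 0, c ≤ ‖g t‖) :
    ‖∫ t in Ioi (0 : ℝ), ((Real.exp (-t) * t ^ (M - 1) : ℝ) : ℂ) / g t‖ ≤ Real.Gamma M / c := by
  have hbound : ∀ᵐ t ∂volume.restrict (Ioi (0 : ℝ)),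
      ‖((Real.exp (-t) * t ^ (M - 1) : ℝ) : ℂ) / g t‖ ≤ Real.exp (-t) * t ^ (M - 1) / c := by
    filter_upwards [ae_restrict_mem measurableSet_Ioi] with t (ht : 0 < t)
    rw [norm_div, norm_real, Real.norm_of_nonneg (by positivity)]
    gcongr
    exact hg t ht
  calc _ ≤ ∫ t in Ioi (0 : ℝ), Real.exp (-t) * t ^ (M - 1) / c :=
        norm_integral_le_of_norm_le ((GammaIntegral_convergent hM).div_const c) hbound
    _ = Real.Gamma M / c := by rw [integral_div, Gamma_eq_integral hM]

theorem hyperterminant_bound_case2_csc_general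
    (M : ℝ) (hM : 0 < M) (ω : ℕ) (r : ℝ)
    (θ : ℝ) (hθ₁ : π * ω / 2 < |θ|) (hθ₂ : |θ| < π * ω) :
    ‖∫ t in Set.Ioi (0 : ℝ),
        ((Real.exp (-t) * t ^ (M - 1) : ℝ) : ℂ) /
          (1 + (((t / r) ^ (1 / (ω : ℝ)) : ℝ) : ℂ) *
            Complex.exp (-(θ / (ω : ℝ)) * Complex.I))‖
      ≤ Real.Gamma M * |1 / Real.sin (θ / (ω : ℝ))| := by
  have hω : (0 : ℝ) < ω := pos_of_mul_pos_right (by linarith [abs_nonneg θ]) pi_pos.le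
  have hφ : |θ / ω| < π := by rw [abs_div, Nat.abs_cast, div_lt_iff₀ hω]; linarith
  have hsin : Real.sin (θ / ω) ≠ 0 := by
    rw [Ne, sin_eq_zero_iff_of_lt_of_lt (neg_lt_of_abs_lt hφ) (lt_of_abs_lt hφ)]
    exact div_ne_zero (abs_pos.mp (by linarith [pi_pos])) hω.ne'
  rw [abs_div, abs_one, mul_one_div]
  refine norm_integral_gammaIntegrand_div_le hM (abs_pos.mpr hsin) fun t _ => ?_
  simpa only [ofReal_div, ofReal_natCast] using
    abs_sin_le_norm_one_add_ofReal_mul_exp (θ / ω) ((t / r) ^ (1 / (ω : ℝ)))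

/-- Second case of the bound for the generalised first-level hyperterminant:
for `M > 0`, `ω` a positive integer, `r > 0` and `πω/2 < |θ| < πω`, the modulus of
`∫_0^∞ e^{-t} t^{M-1} / (1 + (t/r)^{1/ω} e^{-iθ/ω}) dt` is at most `Γ(M)·|csc(θ/ω)|`. -/
theorem hyperterminant_bound_case2_csc
    (M : ℝ) (hM : 0 < M) (ω : ℕ) (hω : 0 < ω) (r : ℝ) (hr : 0 < r)
    (θ : ℝ) (hθ₁ : π * ω / 2 < |θ|) (hθ₂ : |θ| < π * ω) :
    ‖∫ t in Set.Ioi (0 : ℝ),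
        ((Real.exp (-t) * t ^ (M - 1) : ℝ) : ℂ) /
          (1 + (((t / r) ^ (1 / (ω : ℝ)) : ℝ) : ℂ) *
            Complex.exp (-(θ / (ω : ℝ)) * Complex.I))‖
      ≤ Real.Gamma M * |1 / Real.sin (θ / (ω : ℝ))| :=
  hyperterminant_bound_case2_csc_general M hM ω r θ hθ₁ hθ₂
end

section
/- Let M > 0 be real, ω a positive integer, r > 0 real, φ real with 0 < φ < π/2, and θ real with πω/2 < θ < πω. Then the contour-rotation identity holds: ∫_0^∞ e^{-t} t^{M-1} / (1 + (t/r)^{1/ω} e^{-iθ/ω}) dt = (e^{iMφ}/(cos φ)^M) · ∫_0^∞ e^{-u e^{iφ}/cos φ} u^{M-1} / (1 + (u/(r cos φ))^{1/ω} e^{i(φ-θ)/ω}) du, both integrals being absolutely convergent. -/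
/-!
The contour is rotated with the identity theorem instead of a contour integral. For `s` in a
sector where the integrand `f` is holomorphic, `s ↦ s ∫₀^∞ f (s u) du` is holomorphic
(differentiation under the integral sign, the derivative being controlled by Cauchy's estimate),
and for real `s > 0` it equals `∫₀^∞ f t dt` by the substitution `t = s u`. It is therefore
constant on the sector, and its value at `s = e^{iφ} / cos φ` is the right-hand side.
On the ray of argument `α` the denominator `1 + (t/r)^{1/ω} e^{-iθ/ω}` has modulus at least
`sin ((θ - α) / ω)`, which is positive for `θ - πω < α < θ`; together with `Re s > 0` this gives
a gamma-function majorant locally uniform in `s`.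
-/

open MeasureTheory Real Complex Set Metric Filter Topology

section RayIntegral

variable {E : Type*} [NormedAddCommGroup E]

theorem integrableOn_comp_mul_Ioi {f : ℂ → E} {U : Set ℂ}
    (hf : ContinuousOn f U) (hcone : ∀ s ∈ U, ∀ u : ℝ, 0 < u → s * u ∈ U) {s : ℂ} (hs : s ∈ U)
    {bound : ℝ → ℝ} (hbound : IntegrableOn bound (Ioi 0))
    (hle : ∀ u ∈ Ioi (0 : ℝ), ‖f (s * u)‖ ≤ bound u) :
    IntegrableOn (fun u : ℝ ↦ f (s * u)) (Ioi 0) :=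
  hbound.mono' ((hf.comp (by fun_prop) fun u hu ↦ hcone s hs u hu).aestronglyMeasurable
    measurableSet_Ioi) ((ae_restrict_iff' measurableSet_Ioi).2 (.of_forall hle))

theorem exists_bound_of_norm_le_rpow_mul_exp {f : ℂ → E} {K : ℂ → ℝ} {M : ℝ} {s₀ : ℂ}
    (hM : 0 < M) (hK : ContinuousAt K s₀) (hre : 0 < s₀.re)
    (hle : ∀ᶠ s in 𝓝 s₀, ∀ u ∈ Ioi (0 : ℝ),
      ‖f (s * u)‖ ≤ K s * (u ^ (M - 1) * Real.exp (-(s.re * u)))) :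
    ∃ bound : ℝ → ℝ, IntegrableOn bound (Ioi 0) ∧
      ∀ᶠ s in 𝓝 s₀, ∀ u ∈ Ioi (0 : ℝ), ‖f (s * u)‖ ≤ bound u := by
  refine ⟨fun u ↦ (|K s₀| + 1) * (u ^ (M - 1) * Real.exp (-(s₀.re / 2 * u))), ?_, ?_⟩
  · refine Integrable.const_mul ?_ _
    refine (integrableOn_rpow_mul_exp_neg_mul_rpow (s := M - 1) (p := 1) (by linarith) one_pos
      (half_pos hre)).congr_fun (fun u _ ↦ ?_) measurableSet_Ioi
    simp only [Real.rpow_one, neg_mul]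
  have hK' : ∀ᶠ s in 𝓝 s₀, K s < |K s₀| + 1 :=
    hK.eventually (gt_mem_nhds (by linarith [le_abs_self (K s₀)]))
  have hre' : ∀ᶠ s in 𝓝 s₀, s₀.re / 2 < s.re :=
    continuous_re.continuousAt.eventually (lt_mem_nhds (by linarith))
  filter_upwards [hle, hK', hre'] with s hs hKs hres u (hu : 0 < u)
  exact (hs u hu).trans (by gcongr)

variable [NormedSpace ℂ E]

theorem aestronglyMeasurable_deriv_apply {α : Type*} [MeasurableSpace α] {μ : Measure α}
    {F : ℂ → α → E} {s₀ : ℂ} {R : ℝ} (hR : 0 < R)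
    (hF_meas : ∀ s ∈ ball s₀ R, AEStronglyMeasurable (F s) μ)
    (hF_diff : ∀ᵐ a ∂μ, DifferentiableAt ℂ (F · a) s₀) :
    AEStronglyMeasurable (fun a ↦ deriv (F · a) s₀) μ := by
  set h : ℕ → ℂ := fun n ↦ ((R / 2 : ℝ) : ℂ) / n
  have hh : Tendsto h atTop (𝓝[≠] 0) :=
    tendsto_nhdsWithin_iff.2 ⟨tendsto_const_div_atTop_nhds_zero_nat _,
      (eventually_ge_atTop 1).mono fun n hn ↦
        div_ne_zero (by simp [hR.ne']) (Nat.cast_ne_zero.2 (by omega))⟩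
  have hh_mem : ∀ n, s₀ + h n ∈ ball s₀ R := fun n ↦ by
    rw [mem_ball_iff_norm, add_sub_cancel_left, norm_div, Complex.norm_real,
      Complex.norm_natCast, Real.norm_of_nonneg (by positivity)]
    exact (div_nat_le_self_of_nonnneg (by positivity) n).trans_lt (half_lt_self hR)
  refine aestronglyMeasurable_of_tendsto_ae atTop
    (f := fun n a ↦ (h n)⁻¹ • (F (s₀ + h n) a - F s₀ a))
    (fun n ↦ ((hF_meas _ (hh_mem n)).sub (hF_meas _ (mem_ball_self hR))).const_smul _) ?_
  filter_upwards [hF_diff] with a ha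
  exact (hasDerivAt_iff_tendsto_slope_zero.1 ha.hasDerivAt).comp hh

theorem differentiableAt_integral_of_dominated_loc {α : Type*} [MeasurableSpace α]
    {μ : Measure α} {F : ℂ → α → E} {s₀ : ℂ} {R : ℝ} {bound : α → ℝ} (hR : 0 < R)
    (hF_meas : ∀ s ∈ ball s₀ R, AEStronglyMeasurable (F s) μ)
    (hF_diff : ∀ᵐ a ∂μ, DifferentiableOn ℂ (F · a) (ball s₀ R))
    (h_bound : ∀ᵐ a ∂μ, ∀ s ∈ ball s₀ R, ‖F s a‖ ≤ bound a)
    (bound_integrable : Integrable bound μ) :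
    DifferentiableAt ℂ (fun s ↦ ∫ a, F s a ∂μ) s₀ := by
  have hR2 : 0 < R / 2 := half_pos hR
  have hsub : ∀ s ∈ ball s₀ (R / 2), closedBall s (R / 2) ⊆ ball s₀ R := fun s hs ↦
    (closedBall_subset_ball' (by rw [mem_ball] at hs; linarith))
  -- Cauchy's estimate on circles of radius `R / 2` bounds the derivatives uniformly.
  have h_deriv_bound : ∀ᵐ a ∂μ, ∀ s ∈ ball s₀ (R / 2), ‖deriv (F · a) s‖ ≤ bound a / (R / 2) := by
    filter_upwards [hF_diff, h_bound] with a hd hb s hs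
    exact norm_deriv_le_of_forall_mem_sphere_norm_le hR2 (hd.diffContOnCl_ball (hsub s hs))
      fun z hz ↦ hb z (hsub s hs (sphere_subset_closedBall hz))
  have h_diff : ∀ᵐ a ∂μ, ∀ s ∈ ball s₀ (R / 2), HasDerivAt (F · a) (deriv (F · a) s) s := by
    filter_upwards [hF_diff] with a hd s hs
    exact (hd.differentiableAt (isOpen_ball.mem_nhds
      (hsub s hs (mem_closedBall_self hR2.le)))).hasDerivAt
  have hF_int : Integrable (F s₀) μ := bound_integrable.mono' (hF_meas s₀ (mem_ball_self hR))
    (h_bound.mono fun a ha ↦ ha s₀ (mem_ball_self hR))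
  have hF'_meas := aestronglyMeasurable_deriv_apply hR hF_meas
    (hF_diff.mono fun a hd ↦ hd.differentiableAt (isOpen_ball.mem_nhds (mem_ball_self hR)))
  exact (hasDerivAt_integral_of_dominated_loc_of_deriv_le (ball_mem_nhds s₀ hR2)
    (eventually_of_mem (ball_mem_nhds s₀ hR) hF_meas) hF_int hF'_meas h_deriv_bound
    (bound_integrable.div_const _) h_diff).2.differentiableAt

variable [CompleteSpace E]

theorem DifferentiableOn.eqOn_const_of_forall_ofReal {g : ℂ → E} {U : Set ℂ} {c : E}
    (hg : DifferentiableOn ℂ g U) (hU : IsOpen U) (hU' : IsPreconnected U) (h1 : (1 : ℂ) ∈ U)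
    (hc : ∀ x : ℝ, 0 < x → (x : ℂ) ∈ U → g x = c) :
    EqOn g (fun _ ↦ c) U := by
  have hreal : Tendsto ((↑) : ℝ → ℂ) (𝓝[≠] 1) (𝓝[≠] 1) :=
    Complex.continuous_ofReal.continuousWithinAt.tendsto_nhdsWithin fun x hx ↦ by
      simpa using hx
  have hnear : ∀ᶠ x : ℝ in 𝓝[≠] 1, 0 < x ∧ (x : ℂ) ∈ U :=
    nhdsWithin_le_nhds <| (lt_mem_nhds one_pos).and <|
      Complex.continuous_ofReal.continuousAt.preimage_mem_nhds (by simpa using hU.mem_nhds h1)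
  refine (hg.analyticOnNhd hU).eqOn_of_preconnected_of_frequently_eq analyticOnNhd_const hU' h1 ?_
  exact hreal.frequently (hnear.mono fun x hx ↦ hc x hx.1 hx.2).frequently

theorem smul_integral_comp_mul_Ioi_eq {f : ℂ → E} {U : Set ℂ}
    (hU : IsOpen U) (hU' : IsPreconnected U) (h1 : (1 : ℂ) ∈ U)
    (hcone : ∀ s ∈ U, ∀ u : ℝ, 0 < u → s * u ∈ U) (hf : DifferentiableOn ℂ f U)
    (hdom : ∀ s₀ ∈ U, ∃ bound : ℝ → ℝ, IntegrableOn bound (Ioi 0) ∧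
      ∀ᶠ s in 𝓝 s₀, ∀ u ∈ Ioi (0 : ℝ), ‖f (s * u)‖ ≤ bound u)
    {s : ℂ} (hs : s ∈ U) :
    s • ∫ u in Ioi (0 : ℝ), f (s * u) = ∫ t in Ioi (0 : ℝ), f t := by
  have hdiff : DifferentiableOn ℂ (fun s ↦ s • ∫ u in Ioi (0 : ℝ), f (s * u)) U := by
    refine differentiableOn_id.smul fun s₀ hs₀ ↦ ?_
    obtain ⟨bound, hbound, hle⟩ := hdom s₀ hs₀
    obtain ⟨R, hR, hball⟩ := Metric.mem_nhds_iff.1 (hle.and (hU.eventually_mem hs₀))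
    refine (differentiableAt_integral_of_dominated_loc hR (fun s hs ↦ ?_) ?_ ?_ hbound
      ).differentiableWithinAt
    · exact (integrableOn_comp_mul_Ioi hf.continuousOn hcone (hball hs).2 hbound
        (hball hs).1).aestronglyMeasurable
    · refine (ae_restrict_iff' measurableSet_Ioi).2 (.of_forall fun u hu ↦ ?_)
      exact hf.comp (by fun_prop) fun s hs ↦ hcone s (hball hs).2 u hu
    · exact (ae_restrict_iff' measurableSet_Ioi).2 (.of_forall fun u hu s hs ↦ (hball hs).1 u hu)
  refine hdiff.eqOn_const_of_forall_ofReal hU hU' h1 (fun x hx _ ↦ ?_) hs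
  have := integral_comp_mul_left_Ioi (fun t : ℝ ↦ f t) 0 hx
  simp only [mul_zero, Complex.ofReal_mul] at this
  rw [this, ← Complex.coe_smul, smul_smul, ← Complex.ofReal_mul, mul_inv_cancel₀ hx.ne',
    Complex.ofReal_one, one_smul]

end RayIntegral

def argSector (a b : ℝ) : Set ℂ := {s | s ≠ 0 ∧ s.arg ∈ Ioo a b}

section ArgSector

variable {a b : ℝ}

theorem Ioi_prod_Ioo_subset_polarCoord_target (ha : -π ≤ a) (hb : b ≤ π) :
    Ioi 0 ×ˢ Ioo a b ⊆ Complex.polarCoord.target := by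
  rw [Complex.polarCoord_target]
  exact prod_mono le_rfl (Ioo_subset_Ioo ha hb)

theorem argSector_eq_image_polarCoord_symm (ha : -π ≤ a) (hb : b ≤ π) :
    argSector a b = Complex.polarCoord.symm '' (Ioi 0 ×ˢ Ioo a b) := by
  ext s
  constructor
  · rintro ⟨hs, harg⟩
    have hslit : s ∈ slitPlane := mem_slitPlane_iff_arg.2 ⟨(harg.2.trans_le hb).ne, hs⟩
    refine ⟨Complex.polarCoord s, ?_, Complex.polarCoord.left_inv hslit⟩
    rw [Complex.polarCoord_apply]
    exact ⟨norm_pos_iff.2 hs, harg⟩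
  · rintro ⟨p, hp, rfl⟩
    have h := Complex.polarCoord.right_inv (Ioi_prod_Ioo_subset_polarCoord_target ha hb hp)
    simp only [Complex.polarCoord_apply, Prod.ext_iff] at h
    refine ⟨fun h0 ↦ ?_, h.2 ▸ hp.2⟩
    rw [h0, norm_zero] at h
    exact (mem_Ioi.1 hp.1).ne h.1

theorem isOpen_argSector (ha : -π ≤ a) (hb : b ≤ π) : IsOpen (argSector a b) := by
  rw [argSector_eq_image_polarCoord_symm ha hb]
  exact Complex.polarCoord.isOpen_image_symm_of_subset_target (isOpen_Ioi.prod isOpen_Ioo)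
    (Ioi_prod_Ioo_subset_polarCoord_target ha hb)

theorem isPreconnected_argSector (ha : -π ≤ a) (hb : b ≤ π) : IsPreconnected (argSector a b) := by
  rw [argSector_eq_image_polarCoord_symm ha hb]
  exact ((convex_Ioi 0).prod (convex_Ioo a b)).isPreconnected.image _
    (Complex.polarCoord.continuousOn_symm.mono (Ioi_prod_Ioo_subset_polarCoord_target ha hb))

theorem mul_ofReal_mem_argSector {s : ℂ} (hs : s ∈ argSector a b) {u : ℝ} (hu : 0 < u) :
    s * u ∈ argSector a b :=
  ⟨mul_ne_zero hs.1 (ofReal_ne_zero.2 hu.ne'), (arg_mul_real hu s).symm ▸ hs.2⟩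

theorem one_mem_argSector (ha : a < 0) (hb : 0 < b) : (1 : ℂ) ∈ argSector a b :=
  ⟨one_ne_zero, by simpa using ⟨ha, hb⟩⟩

theorem mem_slitPlane_of_mem_argSector (hb : b ≤ π) {s : ℂ} (hs : s ∈ argSector a b) :
    s ∈ slitPlane :=
  mem_slitPlane_iff_arg.2 ⟨(hs.2.2.trans_le hb).ne, hs.1⟩

end ArgSector

theorem abs_sin_le_norm_one_add_mul_exp (ρ α : ℝ) :
    |Real.sin α| ≤ ‖1 + ρ * Complex.exp (α * Complex.I)‖ := by
  have h : 1 + ρ * Complex.exp (α * Complex.I) = ⟨1 + ρ * Real.cos α, ρ * Real.sin α⟩ := by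
    apply Complex.ext <;> simp [Complex.exp_ofReal_mul_I_re, Complex.exp_ofReal_mul_I_im]
  rw [h, Complex.norm_def, Complex.normSq_mk, ← Real.sqrt_sq_eq_abs]
  apply Real.sqrt_le_sqrt
  nlinarith [Real.sin_sq_add_cos_sq α, sq_nonneg (ρ + Real.cos α)]

theorem cpow_ofReal_eq_mul_exp (t : ℂ) (y : ℝ) :
    t ^ (y : ℂ) = ((‖t‖ ^ y : ℝ) : ℂ) * Complex.exp ((t.arg * y : ℝ) * Complex.I) := by
  rw [cpow_ofReal, Complex.exp_mul_I, ← Complex.ofReal_cos, ← Complex.ofReal_sin]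

theorem arg_ofReal_mul_exp_mul_I {ρ φ : ℝ} (hρ : 0 < ρ) (hφ : φ ∈ Ioc (-π) π) :
    ((ρ : ℂ) * Complex.exp (φ * Complex.I)).arg = φ := by
  rw [arg_real_mul _ hρ, Complex.exp_mul_I, arg_cos_add_sin_mul_I hφ]

theorem ofReal_mul_exp_mul_I_cpow {ρ φ : ℝ} (hρ : 0 < ρ) (hφ : φ ∈ Ioc (-π) π) (y : ℝ) :
    ((ρ : ℂ) * Complex.exp (φ * Complex.I)) ^ (y : ℂ) =
      ((ρ ^ y : ℝ) : ℂ) * Complex.exp ((φ * y : ℝ) * Complex.I) := by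
  rw [cpow_ofReal_eq_mul_exp, arg_ofReal_mul_exp_mul_I hρ hφ, norm_mul, Complex.norm_real,
    Real.norm_of_nonneg hρ.le, norm_exp_ofReal_mul_I, mul_one]

noncomputable def hyperterminantDenom (r θ : ℝ) (ω : ℕ) (t : ℂ) : ℂ :=
  1 + (t / r) ^ ((1 / (ω : ℝ) : ℝ) : ℂ) * Complex.exp (-(θ / (ω : ℝ)) * Complex.I)

noncomputable def hyperterminantIntegrand (M r θ : ℝ) (ω : ℕ) (t : ℂ) : ℂ :=
  Complex.exp (-t) * t ^ ((M - 1 : ℝ) : ℂ) / hyperterminantDenom r θ ω t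

section Hyperterminant

variable {M r θ : ℝ} {ω : ℕ}

theorem hyperterminantDenom_eq (hr : 0 < r) (t : ℂ) :
    hyperterminantDenom r θ ω t =
      1 + ((‖t / r‖ ^ (1 / (ω : ℝ)) : ℝ) : ℂ) *
        Complex.exp (((t.arg - θ) / ω : ℝ) * Complex.I) := by
  have harg : (t / r).arg = t.arg := by
    rw [div_eq_mul_inv, ← Complex.ofReal_inv, arg_mul_real (inv_pos.2 hr)]
  rw [hyperterminantDenom, cpow_ofReal_eq_mul_exp, harg, mul_assoc, ← Complex.exp_add]
  congr 3
  push_cast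
  ring

theorem sin_le_norm_hyperterminantDenom (hr : 0 < r) (t : ℂ) :
    Real.sin ((θ - t.arg) / ω) ≤ ‖hyperterminantDenom r θ ω t‖ := by
  rw [hyperterminantDenom_eq hr]
  refine le_trans ?_ (abs_sin_le_norm_one_add_mul_exp _ _)
  rw [show (θ - t.arg) / ω = -((t.arg - θ) / ω) by ring, Real.sin_neg]
  exact neg_le_abs _

theorem hyperterminantDenom_ne_zero (hr : 0 < r) {t : ℂ} (hsin : 0 < Real.sin ((θ - t.arg) / ω)) :
    hyperterminantDenom r θ ω t ≠ 0 :=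
  norm_pos_iff.1 (hsin.trans_le (sin_le_norm_hyperterminantDenom hr t))

theorem differentiableAt_hyperterminantIntegrand (hr : 0 < r) {t : ℂ} (ht : t ∈ slitPlane)
    (hsin : 0 < Real.sin ((θ - t.arg) / ω)) :
    DifferentiableAt ℂ (hyperterminantIntegrand M r θ ω) t := by
  have hdiv : t / r ∈ slitPlane := by
    rw [mem_slitPlane_iff_arg, div_eq_mul_inv, ← Complex.ofReal_inv, arg_mul_real (inv_pos.2 hr)]
    exact ⟨(mem_slitPlane_iff_arg.1 ht).1, mul_ne_zero (slitPlane_ne_zero ht) (by simp [hr.ne'])⟩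
  refine DifferentiableAt.div ?_ ?_ (hyperterminantDenom_ne_zero hr hsin)
  · exact (differentiableAt_id.neg.cexp).mul (differentiableAt_id.cpow_const ht)
  · exact (differentiableAt_const _).add
      (((differentiableAt_id.div_const _).cpow_const hdiv).mul_const _)

theorem norm_hyperterminantIntegrand_mul_le (hr : 0 < r) {s : ℂ}
    (hsin : 0 < Real.sin ((θ - s.arg) / ω)) {u : ℝ} (hu : 0 < u) :
    ‖hyperterminantIntegrand M r θ ω (s * u)‖ ≤
      ‖s‖ ^ (M - 1) / Real.sin ((θ - s.arg) / ω) * (u ^ (M - 1) * Real.exp (-(s.re * u))) := by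
  have harg : (s * u).arg = s.arg := arg_mul_real hu s
  have hden := sin_le_norm_hyperterminantDenom (θ := θ) (ω := ω) hr (s * u)
  rw [harg] at hden
  rw [hyperterminantIntegrand, norm_div, norm_mul, Complex.norm_exp, norm_cpow_real, norm_mul,
    Complex.norm_real, Real.norm_of_nonneg hu.le, Real.mul_rpow (norm_nonneg s) hu.le]
  have hre : (-(s * u)).re = -(s.re * u) := by simp
  rw [hre, div_le_iff₀ (hsin.trans_le hden)]
  calc Real.exp (-(s.re * u)) * (‖s‖ ^ (M - 1) * u ^ (M - 1))
      = ‖s‖ ^ (M - 1) / Real.sin ((θ - s.arg) / ω) * (u ^ (M - 1) * Real.exp (-(s.re * u))) *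
          Real.sin ((θ - s.arg) / ω) := by
        field_simp
    _ ≤ _ := by gcongr

theorem exists_bound_hyperterminantIntegrand (hM : 0 < M) (hr : 0 < r) {s₀ : ℂ}
    (hs₀ : s₀ ∈ slitPlane) (hre : 0 < s₀.re) (hsin : 0 < Real.sin ((θ - s₀.arg) / ω)) :
    ∃ bound : ℝ → ℝ, IntegrableOn bound (Ioi 0) ∧ ∀ᶠ s in 𝓝 s₀, ∀ u ∈ Ioi (0 : ℝ),
      ‖hyperterminantIntegrand M r θ ω (s * u)‖ ≤ bound u := by
  have hsinc : ContinuousAt (fun s : ℂ ↦ Real.sin ((θ - s.arg) / ω)) s₀ :=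
    Real.continuous_sin.continuousAt.comp
      ((continuousAt_const.sub (continuousAt_arg hs₀)).div_const _)
  have hnorm : ContinuousAt (fun s : ℂ ↦ ‖s‖ ^ (M - 1)) s₀ :=
    continuous_norm.continuousAt.rpow_const (.inl (norm_ne_zero_iff.2 (slitPlane_ne_zero hs₀)))
  refine exists_bound_of_norm_le_rpow_mul_exp hM (hnorm.div hsinc hsin.ne') hre ?_
  filter_upwards [hsinc.eventually (lt_mem_nhds hsin)] with s hs u hu
  exact norm_hyperterminantIntegrand_mul_le hr hs hu

theorem sin_pos_of_mem_argSector {a b : ℝ} (hω : 0 < ω) (ha : θ - π * ω ≤ a) (hb : b ≤ θ) {s : ℂ}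
    (hs : s ∈ argSector a b) : 0 < Real.sin ((θ - s.arg) / ω) := by
  have hω' : (0 : ℝ) < ω := Nat.cast_pos.2 hω
  obtain ⟨-, hlo, hhi⟩ := hs
  exact Real.sin_pos_of_pos_of_lt_pi (div_pos (by linarith) hω')
    ((div_lt_iff₀ hω').2 (by linarith))

theorem re_pos_of_mem_argSector {a b : ℝ} (ha : -(π / 2) ≤ a) (hb : b ≤ π / 2) {s : ℂ}
    (hs : s ∈ argSector a b) : 0 < s.re :=
  (abs_arg_lt_pi_div_two_iff.1 (abs_lt.2 ⟨by linarith [hs.2.1], by linarith [hs.2.2]⟩)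
    ).resolve_right hs.1

theorem hyperterminantIntegrand_rotation (hM : 0 < M) (hr : 0 < r) (hω : 0 < ω)
    (hθ₁ : π / 2 ≤ θ) (hθ₂ : θ < π * ω) {s : ℂ}
    (hs : s ∈ argSector (max (θ - π * ω) (-(π / 2))) (π / 2)) :
    IntegrableOn (fun u : ℝ ↦ hyperterminantIntegrand M r θ ω (s * u)) (Ioi 0) ∧
      s * ∫ u in Ioi (0 : ℝ), hyperterminantIntegrand M r θ ω (s * u) =
        ∫ t in Ioi (0 : ℝ), hyperterminantIntegrand M r θ ω t := by
  set U := argSector (max (θ - π * ω) (-(π / 2))) (π / 2)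
  have hπ := Real.pi_pos
  have ha : -π ≤ max (θ - π * ω) (-(π / 2)) := by linarith [le_max_right (θ - π * ω) (-(π / 2))]
  have hcone : ∀ s ∈ U, ∀ u : ℝ, 0 < u → s * u ∈ U := fun s hs u ↦ mul_ofReal_mem_argSector hs
  have hslit : ∀ s ∈ U, s ∈ slitPlane := fun s ↦ mem_slitPlane_of_mem_argSector (by linarith)
  have hsin : ∀ s ∈ U, 0 < Real.sin ((θ - s.arg) / ω) :=
    fun s ↦ sin_pos_of_mem_argSector hω (le_max_left _ _) hθ₁
  have hf : DifferentiableOn ℂ (hyperterminantIntegrand M r θ ω) U := fun s hs ↦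
    (differentiableAt_hyperterminantIntegrand hr (hslit s hs) (hsin s hs)).differentiableWithinAt
  have hdom := fun s (hs : s ∈ U) ↦ exists_bound_hyperterminantIntegrand hM hr (hslit s hs)
    (re_pos_of_mem_argSector (le_max_right _ _) le_rfl hs) (hsin s hs)
  obtain ⟨bound, hbound, hle⟩ := hdom s hs
  refine ⟨integrableOn_comp_mul_Ioi hf.continuousOn hcone hs hbound
    fun u hu ↦ hle.self_of_nhds u hu, ?_⟩
  exact smul_integral_comp_mul_Ioi_eq (isOpen_argSector ha (by linarith))
    (isPreconnected_argSector ha (by linarith))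
    (one_mem_argSector (max_lt (by linarith) (by linarith)) (by linarith)) hcone hf hdom hs

theorem hyperterminantIntegrand_ofReal (hr : 0 < r) {t : ℝ} (ht : 0 < t) :
    hyperterminantIntegrand M r θ ω t =
      ((Real.exp (-t) * t ^ (M - 1) : ℝ) : ℂ) /
        (1 + (((t / r) ^ (1 / (ω : ℝ)) : ℝ) : ℂ) * Complex.exp (-(θ / (ω : ℝ)) * Complex.I)) := by
  rw [hyperterminantIntegrand, hyperterminantDenom, ← Complex.ofReal_div,
    ← Complex.ofReal_cpow (div_pos ht hr).le, ← Complex.ofReal_cpow ht.le]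
  push_cast
  rfl

theorem mul_hyperterminantIntegrand_rotated (hr : 0 < r) {ρ φ : ℝ} (hρ : 0 < ρ)
    (hφ : φ ∈ Ioc (-π) π) {u : ℝ} (hu : 0 < u) :
    Complex.exp (φ * Complex.I) / ρ *
        hyperterminantIntegrand M r θ ω (Complex.exp (φ * Complex.I) / ρ * u) =
      Complex.exp (M * φ * Complex.I) / ((ρ ^ M : ℝ) : ℂ) *
        (Complex.exp (-(u : ℂ) * Complex.exp (φ * Complex.I) / ρ) * ((u ^ (M - 1) : ℝ) : ℂ) /
          (1 + (((u / (r * ρ)) ^ (1 / (ω : ℝ)) : ℝ) : ℂ) *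
            Complex.exp (((φ - θ) / (ω : ℝ)) * Complex.I))) := by
  have hsu : Complex.exp (φ * Complex.I) / ρ * u =
      ((u / ρ : ℝ) : ℂ) * Complex.exp (φ * Complex.I) := by
    push_cast; ring
  have hsur : ((u / ρ : ℝ) : ℂ) * Complex.exp (φ * Complex.I) / r =
      ((u / (r * ρ) : ℝ) : ℂ) * Complex.exp (φ * Complex.I) := by
    push_cast; ring
  rw [hyperterminantIntegrand, hyperterminantDenom, hsu, hsur,
    ofReal_mul_exp_mul_I_cpow (by positivity) hφ, ofReal_mul_exp_mul_I_cpow (by positivity) hφ,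
    Real.div_rpow hu.le hρ.le, show ρ ^ M = ρ ^ (M - 1) * ρ by
      rw [← Real.rpow_add_one hρ.ne']; ring_nf]
  have hexpM : Complex.exp (M * φ * Complex.I) =
      Complex.exp (φ * Complex.I) * Complex.exp ((φ * (M - 1) : ℝ) * Complex.I) := by
    rw [← Complex.exp_add]; push_cast; ring_nf
  have hexpθ : Complex.exp ((φ * (1 / ω) : ℝ) * Complex.I) *
      Complex.exp (-(θ / (ω : ℝ)) * Complex.I) =
        Complex.exp (((φ - θ) / (ω : ℝ)) * Complex.I) := by
    rw [← Complex.exp_add]; push_cast; ring_nf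
  rw [hexpM, mul_assoc _ (Complex.exp _), hexpθ]
  have hρ' : ((ρ : ℝ) : ℂ) ≠ 0 := Complex.ofReal_ne_zero.2 hρ.ne'
  have hρM : ((ρ ^ (M - 1) : ℝ) : ℂ) ≠ 0 := Complex.ofReal_ne_zero.2 (by positivity)
  push_cast
  field_simp

end Hyperterminant

/-- Contour-rotation identity for the generalised first-level hyperterminant:
for `M > 0`, `ω` a positive integer, `r > 0`, `0 < φ < π/2` and `πω/2 < θ < πω`,
`∫_0^∞ e^{-t} t^{M-1} / (1 + (t/r)^{1/ω} e^{-iθ/ω}) dt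
  = (e^{iMφ}/(cos φ)^M) ∫_0^∞ e^{-u e^{iφ}/cos φ} u^{M-1}
      / (1 + (u/(r cos φ))^{1/ω} e^{i(φ-θ)/ω}) du`,
both integrals being absolutely convergent. -/
theorem hyperterminant_contour_rotation
    (M : ℝ) (hM : 0 < M) (ω : ℕ) (hω : 0 < ω) (r : ℝ) (hr : 0 < r)
    (φ : ℝ) (hφ₁ : 0 < φ) (hφ₂ : φ < π / 2)
    (θ : ℝ) (hθ₁ : π * ω / 2 < θ) (hθ₂ : θ < π * ω) :
    IntegrableOn
      (fun t : ℝ =>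
        ((Real.exp (-t) * t ^ (M - 1) : ℝ) : ℂ) /
          (1 + (((t / r) ^ (1 / (ω : ℝ)) : ℝ) : ℂ) *
            Complex.exp (-(θ / (ω : ℝ)) * Complex.I)))
      (Set.Ioi (0 : ℝ)) ∧
    IntegrableOn
      (fun u : ℝ =>
        Complex.exp (-(u : ℂ) * Complex.exp ((φ : ℂ) * Complex.I) / (Real.cos φ : ℂ)) *
          ((u ^ (M - 1) : ℝ) : ℂ) /
          (1 + (((u / (r * Real.cos φ)) ^ (1 / (ω : ℝ)) : ℝ) : ℂ) *
            Complex.exp (((φ - θ) / (ω : ℝ)) * Complex.I)))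
      (Set.Ioi (0 : ℝ)) ∧
    (∫ t in Set.Ioi (0 : ℝ),
        ((Real.exp (-t) * t ^ (M - 1) : ℝ) : ℂ) /
          (1 + (((t / r) ^ (1 / (ω : ℝ)) : ℝ) : ℂ) *
            Complex.exp (-(θ / (ω : ℝ)) * Complex.I)))
      = Complex.exp ((M : ℂ) * φ * Complex.I) / ((Real.cos φ ^ M : ℝ) : ℂ) *
        ∫ u in Set.Ioi (0 : ℝ),
          Complex.exp (-(u : ℂ) * Complex.exp ((φ : ℂ) * Complex.I) / (Real.cos φ : ℂ)) *
            ((u ^ (M - 1) : ℝ) : ℂ) /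
            (1 + (((u / (r * Real.cos φ)) ^ (1 / (ω : ℝ)) : ℝ) : ℂ) *
              Complex.exp (((φ - θ) / (ω : ℝ)) * Complex.I)) := by
  have hπ := Real.pi_pos
  have hθ : π / 2 ≤ θ := by nlinarith [(Nat.one_le_cast (α := ℝ)).2 hω]
  have hcos : 0 < Real.cos φ := Real.cos_pos_of_mem_Ioo ⟨by linarith, hφ₂⟩
  have hφ : φ ∈ Ioc (-π) π := ⟨by linarith, by linarith⟩
  set s : ℂ := Complex.exp (φ * Complex.I) / (Real.cos φ : ℂ) with hs_def
  have hs : s ∈ argSector (max (θ - π * ω) (-(π / 2))) (π / 2) := by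
    refine ⟨div_ne_zero (Complex.exp_ne_zero _) (Complex.ofReal_ne_zero.2 hcos.ne'), ?_⟩
    rw [hs_def, div_eq_inv_mul (Complex.exp _), ← Complex.ofReal_inv,
      arg_ofReal_mul_exp_mul_I (inv_pos.2 hcos) hφ]
    exact ⟨max_lt (by linarith) (by linarith), hφ₂⟩
  obtain ⟨hint₁, -⟩ := hyperterminantIntegrand_rotation (M := M) hM hr hω hθ hθ₂
    (one_mem_argSector (max_lt (by linarith) (by linarith)) (by linarith))
  obtain ⟨hint, hrot⟩ := hyperterminantIntegrand_rotation (M := M) hM hr hω hθ hθ₂ hs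
  set c : ℂ := Complex.exp (M * φ * Complex.I) / ((Real.cos φ ^ M : ℝ) : ℂ)
  have hc : c ≠ 0 := div_ne_zero (Complex.exp_ne_zero _)
    (Complex.ofReal_ne_zero.2 (Real.rpow_pos_of_pos hcos M).ne')
  have hleft : EqOn (fun t : ℝ ↦ hyperterminantIntegrand M r θ ω t) _ (Ioi 0) := fun t ht ↦
    hyperterminantIntegrand_ofReal (M := M) (θ := θ) (ω := ω) hr ht
  have hright : EqOn (fun u : ℝ ↦ c⁻¹ * (s * hyperterminantIntegrand M r θ ω (s * u))) _ (Ioi 0) :=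
    fun u hu ↦ (congrArg (c⁻¹ * ·) (mul_hyperterminantIntegrand_rotated hr hcos hφ hu)).trans
      (inv_mul_cancel_left₀ hc _)
  refine ⟨hint₁.congr_fun (fun t ht ↦ by simpa using hleft ht) measurableSet_Ioi,
    IntegrableOn.congr_fun ((hint.const_mul s).const_mul c⁻¹) hright measurableSet_Ioi, ?_⟩
  rw [← setIntegral_congr_fun measurableSet_Ioi hleft,
    ← setIntegral_congr_fun measurableSet_Ioi hright, integral_const_mul, integral_const_mul,
    mul_inv_cancel_left₀ hc, hrot]
end

section
/- Let t ≥ 0 be real and w a nonzero complex number. If |arg w| ≤ π/2 then |1 + t/w| ≥ 1, and if π/2 < |arg w| < π then |1 + t/w| ≥ |sin(arg w)|. -/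
/-! Writing `1 + t/w = (w + t)/w`, both bounds compare `‖w + t‖` with `‖w‖`. Moving `w` by
`t ≥ 0` to the right does not bring it closer to the origin when `re w ≥ 0`, and never changes its
imaginary part, so `‖w + t‖ ≥ |im w| = ‖w‖ |sin (arg w)|`. -/

open Real Complex

theorem norm_one_add_div {K : Type*} [NormedDivisionRing K] {w : K} (hw : w ≠ 0) (z : K) :
    ‖1 + z / w‖ = ‖w + z‖ / ‖w‖ := by
  rw [← norm_div, add_div, div_self hw]

namespace Complex

theorem norm_le_norm_add_ofReal {w : ℂ} (hw : 0 ≤ w.re) {t : ℝ} (ht : 0 ≤ t) :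
    ‖w‖ ≤ ‖w + t‖ := by
  have hsq : ‖w‖ ^ 2 ≤ ‖w + t‖ ^ 2 := by
    simp only [Complex.sq_norm, normSq_apply, add_re, add_im, ofReal_re, ofReal_im, add_zero]
    nlinarith
  exact pow_le_pow_iff_left₀ (norm_nonneg _) (norm_nonneg _) two_ne_zero |>.mp hsq

theorem abs_im_le_norm_add_ofReal (w : ℂ) (t : ℝ) : |w.im| ≤ ‖w + t‖ := by
  simpa using abs_im_le_norm (w + t)

end Complex

/-- Key geometric inequality: for `t ≥ 0` and `w ≠ 0`, if `|arg w| ≤ π/2` then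
`|1 + t/w| ≥ 1`, and if `π/2 < |arg w| < π` then `|1 + t/w| ≥ |sin(arg w)|`. -/
theorem one_add_div_bound
    (t : ℝ) (ht : 0 ≤ t) (w : ℂ) (hw : w ≠ 0) :
    (|Complex.arg w| ≤ π / 2 → 1 ≤ ‖1 + (t : ℂ) / w‖) ∧
    (π / 2 < |Complex.arg w| → |Complex.arg w| < π →
      |Real.sin (Complex.arg w)| ≤ ‖1 + (t : ℂ) / w‖) := by
  rw [norm_one_add_div hw]
  have hw_pos : 0 < ‖w‖ := norm_pos_iff.mpr hw
  refine ⟨fun harg => ?_, fun _ _ => ?_⟩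
  · rw [one_le_div hw_pos]
    exact norm_le_norm_add_ofReal (abs_arg_le_pi_div_two_iff.mp harg) ht
  · rw [sin_arg, abs_div, abs_norm]
    gcongr
    exact abs_im_le_norm_add_ofReal w t
end

section
/- For every real M > 0, one has (1 + 1/M)^{(M+1)/2} · √M ≤ √(e(M + 1/2)). -/
open Real

/-- Key inequality: `(1+t) log(1+t) ≤ t + t log(1+t/2)` for `t ≥ 0`. -/
lemma aux_log_ineq {t : ℝ} (ht : 0 ≤ t) :
    (1 + t) * Real.log (1 + t) ≤ t + t * Real.log (1 + t / 2) := by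
  set g : ℝ → ℝ := fun t => t + t * Real.log (1 + t / 2) - (1 + t) * Real.log (1 + t)
    with hgdef
  have hmono : MonotoneOn g (Set.Ici 0) := by
    have hcont : ContinuousOn g (Set.Ici 0) := by
      apply ContinuousOn.sub
      · apply ContinuousOn.add continuousOn_id
        apply ContinuousOn.mul continuousOn_id
        apply ContinuousOn.log (by fun_prop)
        intro x hx
        simp only [Set.mem_Ici] at hx
        positivity
      · apply ContinuousOn.mul (by fun_prop)
        apply ContinuousOn.log (by fun_prop)
        intro x hx
        simp only [Set.mem_Ici] at hx
        positivity
    have hD : ∀ x : ℝ, 0 < x → HasDerivAt g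
        (1 + (1 * Real.log (1 + x / 2) + x * ((1 / 2) / (1 + x / 2)))
          - (1 * Real.log (1 + x) + (1 + x) * (1 / (1 + x)))) x := by
      intro x hx0
      have hA : (0:ℝ) < 1 + x / 2 := by linarith
      have hB : (0:ℝ) < 1 + x := by linarith
      have h1 : HasDerivAt (fun t : ℝ => 1 + t / 2) (1 / 2) x := by
        simpa using ((hasDerivAt_id x).div_const 2).const_add 1
      have h2 : HasDerivAt (fun t : ℝ => Real.log (1 + t / 2)) ((1 / 2) / (1 + x / 2)) x :=
        h1.log hA.ne'
      have h3 : HasDerivAt (fun t : ℝ => t * Real.log (1 + t / 2))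
          (1 * Real.log (1 + x / 2) + x * ((1 / 2) / (1 + x / 2))) x :=
        (hasDerivAt_id x).mul h2
      have h4 : HasDerivAt (fun t : ℝ => 1 + t) 1 x := by
        simpa using (hasDerivAt_id x).const_add 1
      have h5 : HasDerivAt (fun t : ℝ => Real.log (1 + t)) (1 / (1 + x)) x := h4.log hB.ne'
      have h6 : HasDerivAt (fun t : ℝ => (1 + t) * Real.log (1 + t))
          (1 * Real.log (1 + x) + (1 + x) * (1 / (1 + x))) x := h4.mul h5
      exact ((hasDerivAt_id x).add h3).sub h6
    apply monotoneOn_of_deriv_nonneg (convex_Ici 0) hcont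
    · intro x hx
      rw [interior_Ici] at hx
      exact (hD x hx).differentiableAt.differentiableWithinAt
    intro x hx
    rw [interior_Ici] at hx
    have hx0 : (0:ℝ) < x := hx
    have hA : (0:ℝ) < 1 + x / 2 := by linarith
    have hB : (0:ℝ) < 1 + x := by linarith
    rw [(hD x hx0).deriv]
    have hlb : Real.log ((1 + x) / (1 + x / 2)) ≤ (1 + x) / (1 + x / 2) - 1 :=
      Real.log_le_sub_one_of_pos (by positivity)
    rw [Real.log_div hB.ne' hA.ne'] at hlb
    have he1 : (1 + x) / (1 + x / 2) - 1 = x * ((1 / 2) / (1 + x / 2)) := by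
      field_simp
      ring
    have he2 : (1 + x) * (1 / (1 + x)) = 1 := by field_simp
    rw [he1] at hlb
    rw [he2]
    linarith
  have h0 : g 0 = 0 := by simp [hgdef]
  have := hmono (Set.self_mem_Ici) (Set.mem_Ici.mpr ht) ht
  rw [h0] at this
  simp only [hgdef] at this
  linarith

/-- For every real `M > 0`, `(1 + 1/M)^{(M+1)/2} · √M ≤ √(e(M + 1/2))`. -/
theorem one_add_inv_rpow_succ_half_mul_sqrt_le
    (M : ℝ) (hM : 0 < M) :
    (1 + 1 / M) ^ ((M + 1) / 2) * Real.sqrt M ≤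
      Real.sqrt (Real.exp 1 * (M + 1 / 2)) := by
  have hM1 : (0:ℝ) < 1 + 1 / M := by positivity
  have hMh : (0:ℝ) < M + 1 / 2 := by linarith
  have hR : (0:ℝ) < Real.exp 1 * (M + 1 / 2) := by positivity
  have hLpos : (0:ℝ) < (1 + 1 / M) ^ ((M + 1) / 2) * Real.sqrt M := by positivity
  rw [← Real.log_le_log_iff hLpos (Real.sqrt_pos.mpr hR)]
  rw [Real.log_mul (by positivity) (Real.sqrt_pos.mpr hM).ne', Real.log_rpow hM1,
    Real.log_sqrt hM.le, Real.log_sqrt hR.le, Real.log_mul (Real.exp_pos 1).ne' hMh.ne',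
    Real.log_exp]
  -- use the key inequality with t = 1/M
  have hkey := aux_log_ineq (t := 1 / M) (by positivity)
  have hrw : (1:ℝ) + 1 / M / 2 = (M + 1 / 2) / M := by
    field_simp
  rw [hrw, Real.log_div hMh.ne' hM.ne'] at hkey
  -- multiply through by M
  have h2 := mul_le_mul_of_nonneg_left hkey hM.le
  have hinv : M * (1 / M) = 1 := by field_simp
  have e1 : M * ((1 + 1 / M) * Real.log (1 + 1 / M)) = (M + 1) * Real.log (1 + 1 / M) := by
    field_simp
  have e2 : M * (1 / M + 1 / M * (Real.log (M + 1 / 2) - Real.log M))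
      = 1 + (Real.log (M + 1 / 2) - Real.log M) := by
    field_simp
  rw [e1, e2] at h2
  linarith
end

section
/- Let a > 0 be real and define h_a(M) = (1 + 1/M)^{(M+1)/2} · √(M/(M + a)) for M > 0. Then h_a is monotonically increasing on (0, ∞) if and only if a ≥ 1/2; moreover, for every a > 0, h_a(M) → √e as M → ∞. -/
open Real Filter Set Topology

/-! With `g = log h_a` one has `g' M = (log (1 + M⁻¹) - (M + a)⁻¹) / 2`, and `log (1 + M⁻¹)` lies
strictly between `2 / (2M + 1)` and `(2M + 1) / (2M (M + 1))`. For `a ≥ 1/2` the lower bound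
already exceeds `(M + a)⁻¹`, so `g' > 0`; for `a < 1/2` the upper bound drops below `(M + a)⁻¹`
as soon as `M > a / (1 - 2a)`, so `h_a` eventually decreases. The limit comes from
`h_a(M)² = (1 + 1/M)^(M+1) · M / (M + a) → e`. -/

noncomputable def hFun (a M : ℝ) : ℝ := (1 + 1 / M) ^ ((M + 1) / 2) * √(M / (M + a))

noncomputable def logHFun (a M : ℝ) : ℝ := (M + 1) / 2 * log (1 + M⁻¹) + log (M / (M + a)) / 2

lemma two_div_two_mul_add_one_lt_log_one_add_inv {M : ℝ} (hM : 0 < M) :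
    2 / (2 * M + 1) < log (1 + M⁻¹) := by
  convert lt_log_one_add_of_pos (inv_pos.2 hM) using 1
  field_simp
  ring

-- `log y < sinh (log y) = (y - y⁻¹) / 2` for `y = 1 + M⁻¹ > 1`.
lemma log_one_add_inv_lt {M : ℝ} (hM : 0 < M) :
    log (1 + M⁻¹) < (2 * M + 1) / (2 * M * (M + 1)) := by
  have hy : 0 < 1 + M⁻¹ := by positivity
  have := self_lt_sinh_iff.2 (log_pos (lt_add_of_pos_right 1 (inv_pos.2 hM)))
  rw [sinh_log hy] at this
  convert this using 1
  field_simp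
  ring

lemma hasDerivAt_logHFun {a M : ℝ} (hM : 0 < M) (hMa : 0 < M + a) :
    HasDerivAt (logHFun a) ((log (1 + M⁻¹) - (M + a)⁻¹) / 2) M := by
  have hinv : HasDerivAt (fun x : ℝ => log (1 + x⁻¹)) (-(M ^ 2)⁻¹ / (1 + M⁻¹)) M :=
    ((hasDerivAt_inv hM.ne').const_add 1).log (by positivity)
  have hquot : HasDerivAt (fun x : ℝ => log (x / (x + a)))
      ((1 * (M + a) - M * 1) / (M + a) ^ 2 / (M / (M + a))) M :=
    ((hasDerivAt_id' M).div ((hasDerivAt_id' M).add_const a) hMa.ne').log (div_pos hM hMa).ne'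
  refine ((((hasDerivAt_id' M).add_const 1).div_const 2).mul hinv).add (hquot.div_const 2)
    |>.congr_deriv ?_
  field_simp
  ring

lemma hFun_eq_exp_logHFun {a M : ℝ} (hM : 0 < M) (hMa : 0 < M + a) :
    hFun a M = exp (logHFun a M) := by
  rw [hFun, logHFun, exp_add, sqrt_eq_rpow, one_div, rpow_def_of_pos (by positivity),
    rpow_def_of_pos (by positivity)]
  ring_nf

lemma strictMonoOn_logHFun {a : ℝ} (ha : 1 / 2 ≤ a) : StrictMonoOn (logHFun a) (Ioi 0) := by
  have hderiv : ∀ M ∈ Ioi (0 : ℝ), HasDerivAt (logHFun a) _ M := fun M hM =>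
    hasDerivAt_logHFun hM (by linarith [mem_Ioi.1 hM])
  refine strictMonoOn_of_hasDerivWithinAt_pos (convex_Ioi 0)
    (fun M hM => (hderiv M hM).continuousAt.continuousWithinAt)
    (fun M hM => (hderiv M (interior_subset hM)).hasDerivWithinAt) fun M hM => ?_
  rw [interior_Ioi, mem_Ioi] at hM
  have : (M + a)⁻¹ ≤ 2 / (2 * M + 1) := by
    rw [inv_eq_one_div, div_le_div_iff₀ (by linarith) (by linarith)]; linarith
  linarith [two_div_two_mul_add_one_lt_log_one_add_inv hM]

lemma strictAntiOn_logHFun {a : ℝ} (ha₀ : 0 ≤ a) (ha : a < 1 / 2) :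
    StrictAntiOn (logHFun a) (Ioi (a / (1 - 2 * a))) := by
  have hc : 0 ≤ a / (1 - 2 * a) := div_nonneg ha₀ (by linarith)
  have hderiv : ∀ M ∈ Ioi (a / (1 - 2 * a)), HasDerivAt (logHFun a) _ M := fun M hM =>
    hasDerivAt_logHFun (hc.trans_lt hM) (by linarith [hc.trans_lt hM])
  refine strictAntiOn_of_hasDerivWithinAt_neg (convex_Ioi _)
    (fun M hM => (hderiv M hM).continuousAt.continuousWithinAt)
    (fun M hM => (hderiv M (interior_subset hM)).hasDerivWithinAt) fun M hM => ?_
  rw [interior_Ioi, mem_Ioi, div_lt_iff₀ (by linarith)] at hM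
  have hM0 : 0 < M := by nlinarith
  have : (2 * M + 1) / (2 * M * (M + 1)) < (M + a)⁻¹ := by
    rw [inv_eq_one_div, div_lt_div_iff₀ (by positivity) (by linarith)]; nlinarith
  linarith [log_one_add_inv_lt hM0]

lemma strictMonoOn_logHFun_iff {a : ℝ} (ha : 0 ≤ a) :
    StrictMonoOn (logHFun a) (Ioi 0) ↔ 1 / 2 ≤ a := by
  refine ⟨fun hmono => ?_, strictMonoOn_logHFun⟩
  by_contra! ha'
  set c := a / (1 - 2 * a)
  have hc : 0 ≤ c := div_nonneg ha (by linarith)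
  have h₁ : c + 1 ∈ Ioi c := by simp
  have h₂ : c + 2 ∈ Ioi c := by simp
  exact lt_asymm (hmono (show 0 < c + 1 by linarith) (show 0 < c + 2 by linarith) (by linarith))
    (strictAntiOn_logHFun ha ha' h₁ h₂ (by linarith))

lemma strictMonoOn_hFun_iff {a : ℝ} (ha : 0 ≤ a) :
    StrictMonoOn (hFun a) (Ioi 0) ↔ StrictMonoOn (logHFun a) (Ioi 0) := by
  refine forall₂_congr fun x hx => forall₂_congr fun y hy => ?_
  rw [hFun_eq_exp_logHFun hx (by linarith [mem_Ioi.1 hx]),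
    hFun_eq_exp_logHFun hy (by linarith [mem_Ioi.1 hy]), exp_lt_exp]

lemma tendsto_one_add_inv_rpow_add_one :
    Tendsto (fun M : ℝ => (1 + 1 / M) ^ (M + 1)) atTop (𝓝 (exp 1)) := by
  have hbase : Tendsto (fun M : ℝ => 1 + 1 / M) atTop (𝓝 1) := by
    simpa using tendsto_inv_atTop_zero.const_add (1 : ℝ)
  refine ((tendsto_one_add_div_rpow_exp 1).mul hbase).congr' ?_ |>.trans (by rw [mul_one])
  filter_upwards [eventually_gt_atTop 0] with M hM
  rw [rpow_add_one (by positivity)]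

lemma tendsto_div_add_atTop (a : ℝ) : Tendsto (fun M : ℝ => M / (M + a)) atTop (𝓝 1) := by
  have : Tendsto (fun M : ℝ => (1 + a * M⁻¹)⁻¹) atTop (𝓝 1) := by
    simpa using ((tendsto_inv_atTop_zero.const_mul a).const_add (1 : ℝ)).inv₀ (by simp)
  refine this.congr' ?_
  filter_upwards [eventually_gt_atTop 0] with M hM
  field_simp

lemma hFun_eq_sqrt {a M : ℝ} (hM : 0 < M) :
    hFun a M = √((1 + 1 / M) ^ (M + 1) * (M / (M + a))) := by
  rw [hFun, sqrt_mul (by positivity), sqrt_eq_rpow ((1 + 1 / M) ^ (M + 1)),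
    ← rpow_mul (by positivity)]
  ring_nf

lemma tendsto_hFun (a : ℝ) : Tendsto (hFun a) atTop (𝓝 √(exp 1)) := by
  have := (tendsto_one_add_inv_rpow_add_one.mul (tendsto_div_add_atTop a)).sqrt
  rw [mul_one] at this
  refine this.congr' ?_
  filter_upwards [eventually_gt_atTop 0] with M hM
  rw [hFun_eq_sqrt hM]

/-- For `a > 0`, the function `h_a(M) = (1 + 1/M)^{(M+1)/2} · √(M/(M+a))` is
monotonically increasing on `(0, ∞)` if and only if `a ≥ 1/2`; moreover it tends
to `√e` as `M → ∞`. -/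
theorem monotone_and_limit_h
    (a : ℝ) (ha : 0 < a) :
    (StrictMonoOn (fun M : ℝ => (1 + 1 / M) ^ ((M + 1) / 2) * Real.sqrt (M / (M + a)))
        (Set.Ioi (0 : ℝ)) ↔ 1 / 2 ≤ a) ∧
    Tendsto (fun M : ℝ => (1 + 1 / M) ^ ((M + 1) / 2) * Real.sqrt (M / (M + a)))
      atTop (nhds (Real.sqrt (Real.exp 1))) :=
  ⟨(strictMonoOn_hFun_iff ha.le).trans (strictMonoOn_logHFun_iff ha.le), tendsto_hFun a⟩
end
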